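/- Under the hypotheses of the main recovery theorem (joint RIP with σ_{2K} < 0.1907, ‖Φᵀw‖_{∞,1} ≤ λ/2, T the set of the K largest joint magnitudes of x, T₀₁ = T ∪ T₁ with T₁ the K largest joint magnitudes of h_{Tᶜ}), the error h = x̂ - x satisfies ‖h_{T₀₁}‖₂ ≤ (√K λ c₀ + √2 K^{-1/2} σ_{2K} ‖h_{Tᶜ}‖_{2,1}) / (1 - σ_{2K}), where c₀ = 3√2/2. -/

import Mathlib

open scoped BigOperators
open Finset

/-- Euclidean norm of a finite-dimensional real vector. -/
noncomputable def l2 {ι : Type*} [Fintype ι] (x : ι → ℝ) : ℝ :=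
  Real.sqrt (∑ j, x j ^ 2)

/-- Euclidean inner product. -/
noncomputable def dot {ι : Type*} [Fintype ι] (x y : ι → ℝ) : ℝ := ∑ j, x j * y j

/-- Joint magnitude of the `i`-th pair of a vector in `ℝ^{2N}`. -/
noncomputable def jmag {N : ℕ} (x : Fin N ⊕ Fin N → ℝ) (i : Fin N) : ℝ :=
  Real.sqrt (x (Sum.inl i) ^ 2 + x (Sum.inr i) ^ 2)

/-- Mixed ℓ₂/ℓ₁ norm `‖x‖_{2,1}`. -/
noncomputable def n21 {N : ℕ} (x : Fin N ⊕ Fin N → ℝ) : ℝ := ∑ i, jmag x i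

/-- Mixed ℓ_∞/ℓ₁ norm `‖x‖_{∞,1}`. -/
noncomputable def ninf1 {N : ℕ} (x : Fin N ⊕ Fin N → ℝ) : ℝ := ⨆ i, jmag x i

open Classical in
/-- Joint support of a vector in `ℝ^{2N}`. -/
noncomputable def jsupp {N : ℕ} (x : Fin N ⊕ Fin N → ℝ) : Finset (Fin N) :=
  Finset.univ.filter (fun i => x (Sum.inl i) ≠ 0 ∨ x (Sum.inr i) ≠ 0)

/-- Restriction of `x` to the joint-index set `T` (zeroing other pairs). -/
noncomputable def rT {N : ℕ} (T : Finset (Fin N)) (x : Fin N ⊕ Fin N → ℝ) :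
    Fin N ⊕ Fin N → ℝ := fun j => if Sum.elim id id j ∈ T then x j else 0

/-- Joint restricted isometry property with sparsity level `S` and constant `σ`. -/
def JRIP {M N : ℕ} (Φ : Matrix (Fin M) (Fin N ⊕ Fin N) ℝ) (S : ℕ) (σ : ℝ) : Prop :=
  ∀ v : Fin N ⊕ Fin N → ℝ, (jsupp v).card ≤ S →
    (1 - σ) * l2 v ^ 2 ≤ l2 (Φ.mulVec v) ^ 2 ∧ l2 (Φ.mulVec v) ^ 2 ≤ (1 + σ) * l2 v ^ 2

/-!
Write `h = xh - x` and `h₀₁ = h_{T ∪ T₁}`. Optimality of `xh` and the noise bound give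
`‖ΦᵀΦh‖_{∞,1} ≤ 3λ/2`, hence `⟨Φh, Φh₀₁⟩ ≤ (3λ/2) ‖h₀₁‖_{2,1} ≤ √K c₀ λ ‖h₀₁‖₂`.
From below, `⟨Φh, Φh₀₁⟩ = ‖Φh₀₁‖² + ⟨Φh_{(T ∪ T₁)ᶜ}, Φh₀₁⟩`: the first term is at least
`(1 - σ) ‖h₀₁‖₂²` by the RIP, and cutting `(T ∪ T₁)ᶜ` into blocks of `K` indices of decreasing
joint magnitude, restricted orthogonality and the shelling estimate
`∑_{j ≥ 2} ‖h_{T_j}‖₂ ≤ K^{-1/2} ‖h_{Tᶜ}‖_{2,1}` bound the second by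
`√2 σ K^{-1/2} ‖h₀₁‖₂ ‖h_{Tᶜ}‖_{2,1}` in absolute value. Comparing the two bounds and dividing
by `(1 - σ) ‖h₀₁‖₂` gives the claim.
-/

open scoped Matrix

lemma l2_sq {ι : Type*} [Fintype ι] (v : ι → ℝ) : l2 v ^ 2 = v ⬝ᵥ v :=
  (Real.sq_sqrt (Finset.sum_nonneg fun j _ => sq_nonneg (v j))).trans
    (Finset.sum_congr rfl fun j _ => sq (v j))

lemma l2_nonneg {ι : Type*} [Fintype ι] (v : ι → ℝ) : 0 ≤ l2 v := Real.sqrt_nonneg _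

lemma eq_zero_of_l2_eq_zero {ι : Type*} [Fintype ι] {v : ι → ℝ} (h : l2 v = 0) : v = 0 := by
  rw [← dotProduct_self_eq_zero, ← l2_sq, h, sq, mul_zero]

section JointCoordinates

variable {N : ℕ}

noncomputable def jointPair (i : Fin N) :
    (Fin N ⊕ Fin N → ℝ) →ₗ[ℝ] EuclideanSpace ℝ (Fin 2) where
  toFun v := !₂[v (Sum.inl i), v (Sum.inr i)]
  map_add' u v := by ext j; fin_cases j <;> rfl
  map_smul' c v := by ext j; fin_cases j <;> rfl

lemma jmag_eq_norm (v : Fin N ⊕ Fin N → ℝ) (i : Fin N) : jmag v i = ‖jointPair i v‖ := by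
  simp [jmag, jointPair, EuclideanSpace.norm_eq, Fin.sum_univ_two]

lemma jmag_nonneg (v : Fin N ⊕ Fin N → ℝ) (i : Fin N) : 0 ≤ jmag v i :=
  Real.sqrt_nonneg _

lemma inner_jointPair (u v : Fin N ⊕ Fin N → ℝ) (i : Fin N) :
    inner ℝ (jointPair i u) (jointPair i v) =
      u (Sum.inl i) * v (Sum.inl i) + u (Sum.inr i) * v (Sum.inr i) := by
  simp [jointPair, PiLp.inner_apply, Fin.sum_univ_two, mul_comm]

lemma dotProduct_eq_sum_inner_jointPair (u v : Fin N ⊕ Fin N → ℝ) :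
    u ⬝ᵥ v = ∑ i, inner ℝ (jointPair i u) (jointPair i v) := by
  simp only [dotProduct, Fintype.sum_sum_type, inner_jointPair, Finset.sum_add_distrib]

lemma mem_jsupp {v : Fin N ⊕ Fin N → ℝ} {i : Fin N} : i ∈ jsupp v ↔ jointPair i v ≠ 0 := by
  simp [jsupp, jointPair, or_iff_not_imp_left]

lemma jsupp_smul_add_smul_subset (a b : ℝ) (u v : Fin N ⊕ Fin N → ℝ) :
    jsupp (a • u + b • v) ⊆ jsupp u ∪ jsupp v := by
  intro i hi
  contrapose! hi
  simp only [mem_union, not_or, mem_jsupp, not_not] at hi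
  simp [mem_jsupp, hi.1, hi.2]

lemma dotProduct_eq_zero_of_disjoint_jsupp {u v : Fin N ⊕ Fin N → ℝ}
    (hd : Disjoint (jsupp u) (jsupp v)) : u ⬝ᵥ v = 0 := by
  rw [dotProduct_eq_sum_inner_jointPair]
  refine Finset.sum_eq_zero fun i _ => ?_
  by_cases hu : i ∈ jsupp u
  · rw [not_not.mp (mem_jsupp.not.mp (disjoint_left.mp hd hu)), inner_zero_right]
  · rw [not_not.mp (mem_jsupp.not.mp hu), inner_zero_left]

lemma jointPair_rT (S : Finset (Fin N)) (v : Fin N ⊕ Fin N → ℝ) (i : Fin N) :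
    jointPair i (rT S v) = if i ∈ S then jointPair i v else 0 := by
  ext j; fin_cases j <;> by_cases hi : i ∈ S <;> simp [jointPair, rT, hi]

lemma jmag_rT (S : Finset (Fin N)) (v : Fin N ⊕ Fin N → ℝ) (i : Fin N) :
    jmag (rT S v) i = if i ∈ S then jmag v i else 0 := by
  simp only [jmag_eq_norm, jointPair_rT]
  split_ifs <;> simp

lemma jsupp_rT_subset (S : Finset (Fin N)) (v : Fin N ⊕ Fin N → ℝ) : jsupp (rT S v) ⊆ S := by
  intro i hi
  by_contra hS
  simp [mem_jsupp, jointPair_rT, hS] at hi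

lemma rT_union {A B : Finset (Fin N)} (hd : Disjoint A B) (v : Fin N ⊕ Fin N → ℝ) :
    rT (A ∪ B) v = rT A v + rT B v := by
  funext j
  by_cases hA : Sum.elim id id j ∈ A
  · simp [rT, hA, disjoint_left.mp hd hA]
  · simp [rT, hA]

lemma rT_add_rT_compl (S : Finset (Fin N)) (v : Fin N ⊕ Fin N → ℝ) : rT S v + rT Sᶜ v = v := by
  funext j
  by_cases h : Sum.elim id id j ∈ S <;> simp [rT, h]

lemma n21_rT (S : Finset (Fin N)) (v : Fin N ⊕ Fin N → ℝ) :
    n21 (rT S v) = ∑ i ∈ S, jmag v i := by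
  simp [n21, jmag_rT]

lemma n21_nonneg (v : Fin N ⊕ Fin N → ℝ) : 0 ≤ n21 v :=
  Finset.sum_nonneg fun i _ => jmag_nonneg v i

lemma n21_sub_le (u v : Fin N ⊕ Fin N → ℝ) : n21 (u - v) ≤ n21 u + n21 v := by
  simp only [n21, jmag_eq_norm, map_sub, ← Finset.sum_add_distrib]
  exact Finset.sum_le_sum fun i _ => norm_sub_le _ _

lemma n21_smul (c : ℝ) (v : Fin N ⊕ Fin N → ℝ) : n21 (c • v) = |c| * n21 v := by
  simp [n21, jmag_eq_norm, norm_smul, Finset.mul_sum]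

lemma jmag_le_ninf1 (v : Fin N ⊕ Fin N → ℝ) (i : Fin N) : jmag v i ≤ ninf1 v :=
  le_ciSup (Finite.bddAbove_range _) i

lemma ninf1_nonneg (v : Fin N ⊕ Fin N → ℝ) : 0 ≤ ninf1 v :=
  Real.iSup_nonneg (jmag_nonneg v)

lemma dotProduct_le_n21_mul {u v : Fin N ⊕ Fin N → ℝ} {c : ℝ} (hv : ∀ i, jmag v i ≤ c) :
    u ⬝ᵥ v ≤ n21 u * c := by
  rw [dotProduct_eq_sum_inner_jointPair, n21, Finset.sum_mul]
  refine Finset.sum_le_sum fun i _ => (real_inner_le_norm _ _).trans ?_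
  rw [← jmag_eq_norm, ← jmag_eq_norm]
  exact mul_le_mul_of_nonneg_left (hv i) (jmag_nonneg u i)

lemma l2_rT_sq (S : Finset (Fin N)) (v : Fin N ⊕ Fin N → ℝ) :
    l2 (rT S v) ^ 2 = ∑ i ∈ S, jmag v i ^ 2 := by
  simp only [l2_sq, dotProduct_eq_sum_inner_jointPair, real_inner_self_eq_norm_sq, jointPair_rT,
    jmag_eq_norm]
  simp [apply_ite, Finset.sum_ite_mem]

lemma l2_rT (S : Finset (Fin N)) (v : Fin N ⊕ Fin N → ℝ) :
    l2 (rT S v) = √(∑ i ∈ S, jmag v i ^ 2) := by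
  rw [← l2_rT_sq, Real.sqrt_sq (l2_nonneg _)]

lemma rT_dotProduct_self (S : Finset (Fin N)) (v : Fin N ⊕ Fin N → ℝ) :
    rT S v ⬝ᵥ v = ∑ i ∈ S, jmag v i ^ 2 := by
  rw [← l2_rT_sq, l2_sq]
  exact Finset.sum_congr rfl fun j _ => by simp only [rT]; split_ifs <;> simp

lemma n21_rT_le (S : Finset (Fin N)) (v : Fin N ⊕ Fin N → ℝ) :
    n21 (rT S v) ≤ √S.card * l2 (rT S v) := by
  rw [← Real.sqrt_sq (l2_nonneg _), ← Real.sqrt_mul (Nat.cast_nonneg _), l2_rT_sq, n21_rT]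
  exact Real.le_sqrt_of_sq_le sq_sum_le_card_mul_sum_sq

lemma l2_rT_add_l2_rT_le {A B : Finset (Fin N)} (hd : Disjoint A B) (v : Fin N ⊕ Fin N → ℝ) :
    l2 (rT A v) + l2 (rT B v) ≤ √2 * l2 (rT (A ∪ B) v) := by
  have hsq : l2 (rT (A ∪ B) v) ^ 2 = l2 (rT A v) ^ 2 + l2 (rT B v) ^ 2 := by
    simp only [l2_rT_sq, Finset.sum_union hd]
  rw [← Real.sqrt_sq (l2_nonneg (rT (A ∪ B) v)), ← Real.sqrt_mul zero_le_two, hsq]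
  apply Real.le_sqrt_of_sq_le
  nlinarith [sq_nonneg (l2 (rT A v) - l2 (rT B v))]

end JointCoordinates

section Shelling

variable {ι : Type*}

lemma Finset.exists_subset_card_eq_forall_sdiff_le [DecidableEq ι] (g : ι → ℝ)
    {S : Finset ι} {k : ℕ} (hk : k ≤ S.card) :
    ∃ B ⊆ S, B.card = k ∧ ∀ a ∈ S \ B, ∀ b ∈ B, g a ≤ g b := by
  induction k with
  | zero => exact ⟨∅, empty_subset S, card_empty, by simp⟩
  | succ k ih =>
    obtain ⟨B, hBS, hBcard, hBdom⟩ := ih (Nat.le_of_succ_le hk)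
    have hne : (S \ B).Nonempty := by
      rw [← card_pos, card_sdiff_of_subset hBS]
      omega
    obtain ⟨m, hm, hmax⟩ := (S \ B).exists_max_image g hne
    have hmB : m ∉ B := (mem_sdiff.mp hm).2
    refine ⟨insert m B, insert_subset (mem_sdiff.mp hm).1 hBS,
      by rw [card_insert_of_notMem hmB, hBcard], fun a ha b hb => ?_⟩
    have ha' : a ∈ S \ B := by
      simp only [mem_sdiff, mem_insert, not_or] at ha ⊢
      exact ⟨ha.1, ha.2.2⟩
    rcases mem_insert.mp hb with rfl | hb
    · exact hmax a ha'
    · exact hBdom a ha' b hb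

lemma sqrt_sum_sq_le_sqrt_card_mul {g : ι → ℝ} {B : Finset ι} {K : ℕ} {c : ℝ}
    (hB : B.card ≤ K) (hg : ∀ i ∈ B, 0 ≤ g i) (hc0 : 0 ≤ c) (hc : ∀ i ∈ B, g i ≤ c) :
    √(∑ i ∈ B, g i ^ 2) ≤ √K * c := by
  rw [← Real.sqrt_sq hc0, ← Real.sqrt_mul (Nat.cast_nonneg K)]
  refine Real.sqrt_le_sqrt ((sum_le_card_nsmul B _ (c ^ 2) fun i hi =>
    pow_le_pow_left₀ (hg i hi) (hc i hi) 2).trans ?_)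
  rw [nsmul_eq_mul]
  exact mul_le_mul_of_nonneg_right (by exact_mod_cast hB) (sq_nonneg c)

lemma Real.sqrt_mul_div_self (x : ℝ) {K : ℝ} (hK : 0 < K) : √K * (x / K) = x / √K := by
  rw [← Real.sq_sqrt hK.le, Real.sqrt_sq (Real.sqrt_nonneg _)]
  field_simp

variable [DecidableEq ι] (F : Finset ι → ℝ) {g : ι → ℝ} {U : Finset ι} {K : ℕ} {D : ℝ}

/-- The shelling argument: peel off the `K` largest entries of `S` as one block, and bound every
remaining entry by the average over that block. -/
lemma le_of_shelling (hK : 0 < K) (hD : 0 ≤ D) (hg : ∀ i, 0 ≤ g i)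
    (hunion : ∀ A B, Disjoint A B → F (A ∪ B) ≤ F A + F B)
    (hblock : ∀ B ⊆ U, B.card ≤ K → F B ≤ D * √(∑ i ∈ B, g i ^ 2))
    {S : Finset ι} (hSU : S ⊆ U) {c : ℝ} (hc0 : 0 ≤ c) (hc : ∀ a ∈ S, g a ≤ c) :
    F S ≤ D * (√K * c + (∑ i ∈ S, g i) / √K) := by
  induction S using Finset.strongInduction generalizing c with
  | H S ih =>
  by_cases hSK : S.card ≤ K
  · calc F S ≤ D * √(∑ i ∈ S, g i ^ 2) := hblock S hSU hSK
      _ ≤ D * (√K * c) := by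
        gcongr
        exact sqrt_sum_sq_le_sqrt_card_mul hSK (fun i _ => hg i) hc0 hc
      _ ≤ D * (√K * c + (∑ i ∈ S, g i) / √K) := by
        gcongr
        exact le_add_of_nonneg_right (div_nonneg (sum_nonneg fun i _ => hg i) (Real.sqrt_nonneg _))
  obtain ⟨B, hBS, hBcard, hBdom⟩ :=
    Finset.exists_subset_card_eq_forall_sdiff_le g (not_le.mp hSK).le
  have hKpos : (0 : ℝ) < K := Nat.cast_pos.mpr hK
  set c' := (∑ i ∈ B, g i) / K
  have hc'0 : 0 ≤ c' := div_nonneg (sum_nonneg fun i _ => hg i) hKpos.le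
  have hc' : ∀ a ∈ S \ B, g a ≤ c' := fun a ha => by
    rw [le_div_iff₀ hKpos, mul_comm, ← hBcard, ← nsmul_eq_mul]
    exact card_nsmul_le_sum B g (g a) (hBdom a ha)
  have hrest := ih (S \ B) (sdiff_ssubset hBS (card_pos.mp (hBcard ▸ hK)))
    (sdiff_subset.trans hSU) hc'0 hc'
  have hfirst : F B ≤ D * (√K * c) := (hblock B (hBS.trans hSU) hBcard.le).trans <| by
    gcongr
    exact sqrt_sum_sq_le_sqrt_card_mul hBcard.le (fun i _ => hg i) hc0 fun i hi => hc i (hBS hi)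
  have hsplit : F S ≤ F B + F (S \ B) := by
    simpa only [union_sdiff_of_subset hBS] using hunion B (S \ B) disjoint_sdiff
  calc F S ≤ D * (√K * c) + D * (√K * c' + (∑ i ∈ S \ B, g i) / √K) := by linarith
    _ = D * (√K * c + (∑ i ∈ S, g i) / √K) := by
      rw [Real.sqrt_mul_div_self _ hKpos, ← sum_sdiff hBS]
      ring

lemma le_of_shelling_of_top (hK : 0 < K) (hD : 0 ≤ D) (hg : ∀ i, 0 ≤ g i)
    (hunion : ∀ A B, Disjoint A B → F (A ∪ B) ≤ F A + F B) {T : Finset ι}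
    (hblock : ∀ B ⊆ U \ T, B.card ≤ K → F B ≤ D * √(∑ i ∈ B, g i ^ 2))
    (hTU : T ⊆ U) (hTcard : T.card = K) (hTdom : ∀ i ∈ T, ∀ j ∈ U \ T, g j ≤ g i) :
    F (U \ T) ≤ D * (∑ i ∈ U, g i) / √K := by
  have hKpos : (0 : ℝ) < K := Nat.cast_pos.mpr hK
  have hc : ∀ a ∈ U \ T, g a ≤ (∑ i ∈ T, g i) / K := fun a ha => by
    rw [le_div_iff₀ hKpos, mul_comm, ← hTcard, ← nsmul_eq_mul]
    exact card_nsmul_le_sum T g (g a) fun i hi => hTdom i hi a ha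
  have h := le_of_shelling F hK hD hg hunion hblock subset_rfl
    (div_nonneg (sum_nonneg fun i _ => hg i) hKpos.le) hc
  calc F (U \ T) ≤ _ := h
    _ = D * (∑ i ∈ U, g i) / √K := by
      rw [Real.sqrt_mul_div_self _ hKpos, ← sum_sdiff hTU]
      ring

end Shelling

lemma le_of_forall_pos_le_add_mul {a b C : ℝ} (hC : 0 ≤ C) (h : ∀ t > 0, a ≤ b + t * C) :
    a ≤ b := by
  refine le_of_forall_pos_le_add fun ε hε => (h (ε / (C + 1)) (by positivity)).trans ?_
  gcongr
  rw [div_mul_eq_mul_div, div_le_iff₀ (by positivity)]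
  nlinarith

section GroupLasso

variable {M N : ℕ} (Φ : Matrix (Fin M) (Fin N ⊕ Fin N) ℝ) {lam : ℝ} {xh : Fin N ⊕ Fin N → ℝ}
  {y : Fin M → ℝ}

/-- First-order optimality of the group-lasso minimiser `xh`: moving `xh` against the `i`-th pair
`p` of the gradient lowers the quadratic term by `t ‖p‖²` to first order and raises the penalty
by at most `lam t ‖p‖`. -/
lemma jmag_transpose_mulVec_residual_le (hlam : 0 ≤ lam)
    (hmin : ∀ u : Fin N ⊕ Fin N → ℝ,
      1 / 2 * l2 (Φ *ᵥ xh - y) ^ 2 + lam * n21 xh ≤ 1 / 2 * l2 (Φ *ᵥ u - y) ^ 2 + lam * n21 u)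
    (i : Fin N) : jmag (Φᵀ *ᵥ (Φ *ᵥ xh - y)) i ≤ lam := by
  set r := Φᵀ *ᵥ (Φ *ᵥ xh - y)
  set p := rT {i} r
  have hpr : Φ *ᵥ p ⬝ᵥ (Φ *ᵥ xh - y) = jmag r i ^ 2 := by
    rw [dotProduct_comm, Matrix.dotProduct_mulVec, ← Matrix.mulVec_transpose, dotProduct_comm,
      rT_dotProduct_self, sum_singleton]
  have hnp : n21 p = jmag r i := by rw [n21_rT, sum_singleton]
  have hstep : jmag r i ^ 2 ≤ lam * jmag r i := by
    refine le_of_forall_pos_le_add_mul (C := (Φ *ᵥ p ⬝ᵥ Φ *ᵥ p) / 2) ?_ fun t ht => ?_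
    · rw [← l2_sq]; positivity
    have hpen : n21 (xh - t • p) ≤ n21 xh + t * jmag r i := by
      simpa [n21_smul, hnp, abs_of_pos ht] using n21_sub_le xh (t • p)
    have hres : Φ *ᵥ (xh - t • p) - y = (Φ *ᵥ xh - y) - t • Φ *ᵥ p := by
      rw [Matrix.mulVec_sub, Matrix.mulVec_smul, sub_right_comm]
    have hobj := hmin (xh - t • p)
    set A := Φ *ᵥ xh - y
    rw [hres, l2_sq, l2_sq] at hobj
    simp only [sub_dotProduct, dotProduct_sub, smul_dotProduct, dotProduct_smul, smul_eq_mul,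
      dotProduct_comm A (Φ *ᵥ p), hpr] at hobj
    refine le_of_mul_le_mul_left ?_ ht
    nlinarith [mul_le_mul_of_nonneg_left hpen hlam]
  nlinarith [jmag_nonneg r i]

lemma jmag_gram_sub_le (hlam : 0 ≤ lam)
    (hmin : ∀ u : Fin N ⊕ Fin N → ℝ,
      1 / 2 * l2 (Φ *ᵥ xh - y) ^ 2 + lam * n21 xh ≤ 1 / 2 * l2 (Φ *ᵥ u - y) ^ 2 + lam * n21 u)
    {x : Fin N ⊕ Fin N → ℝ} {w : Fin M → ℝ} (hy : y = Φ *ᵥ x + w)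
    (hw : ninf1 (Φᵀ *ᵥ w) ≤ lam / 2) (i : Fin N) :
    jmag (Φᵀ *ᵥ (Φ *ᵥ (xh - x))) i ≤ 3 / 2 * lam := by
  have hsplit : Φᵀ *ᵥ (Φ *ᵥ (xh - x)) = Φᵀ *ᵥ (Φ *ᵥ xh - y) + Φᵀ *ᵥ w := by
    rw [← Matrix.mulVec_add, hy, Matrix.mulVec_sub]
    abel_nf
  rw [hsplit, jmag_eq_norm, map_add]
  calc _ ≤ jmag (Φᵀ *ᵥ (Φ *ᵥ xh - y)) i + jmag (Φᵀ *ᵥ w) i := by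
        simpa only [jmag_eq_norm] using norm_add_le _ _
    _ ≤ lam + lam / 2 :=
        add_le_add (jmag_transpose_mulVec_residual_le Φ hlam hmin i) ((jmag_le_ninf1 _ i).trans hw)
    _ = 3 / 2 * lam := by ring

lemma dotProduct_mulVec_rT_le {h : Fin N ⊕ Fin N → ℝ} {b : ℝ} (hb : 0 ≤ b)
    (hgram : ∀ i, jmag (Φᵀ *ᵥ (Φ *ᵥ h)) i ≤ b) (S : Finset (Fin N)) :
    Φ *ᵥ h ⬝ᵥ Φ *ᵥ rT S h ≤ b * √S.card * l2 (rT S h) := by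
  rw [Matrix.dotProduct_mulVec, ← Matrix.mulVec_transpose, dotProduct_comm]
  calc _ ≤ n21 (rT S h) * b := dotProduct_le_n21_mul hgram
    _ ≤ √S.card * l2 (rT S h) * b := mul_le_mul_of_nonneg_right (n21_rT_le S h) hb
    _ = b * √S.card * l2 (rT S h) := by ring

end GroupLasso

namespace JRIP

variable {M N K s : ℕ} {Φ : Matrix (Fin M) (Fin N ⊕ Fin N) ℝ} {σ : ℝ}

lemma abs_dotProduct_mulVec_le_of_orthogonal (hRIP : JRIP Φ s σ) {u v : Fin N ⊕ Fin N → ℝ}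
    (hadd : (jsupp (u + v)).card ≤ s) (hsub : (jsupp (u - v)).card ≤ s) (huv : u ⬝ᵥ v = 0) :
    |Φ *ᵥ u ⬝ᵥ Φ *ᵥ v| ≤ σ * (l2 u ^ 2 + l2 v ^ 2) / 2 := by
  have hplus := hRIP (u + v) hadd
  have hminus := hRIP (u - v) hsub
  simp only [l2_sq, Matrix.mulVec_add, Matrix.mulVec_sub, add_dotProduct, dotProduct_add,
    sub_dotProduct, dotProduct_sub, dotProduct_comm v u, dotProduct_comm (Φ *ᵥ v) (Φ *ᵥ u),
    huv] at hplus hminus ⊢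
  rw [abs_le]
  constructor <;> linarith [hplus.1, hplus.2, hminus.1, hminus.2]

/-- The polarization bound above, applied to `‖v‖ • u` and `‖u‖ • v`, which have equal norms. -/
lemma abs_dotProduct_mulVec_le_of_disjoint (hRIP : JRIP Φ s σ) {u v : Fin N ⊕ Fin N → ℝ}
    (hd : Disjoint (jsupp u) (jsupp v)) (hcard : (jsupp u ∪ jsupp v).card ≤ s) :
    |Φ *ᵥ u ⬝ᵥ Φ *ᵥ v| ≤ σ * l2 u * l2 v := by
  have hsupp : ∀ a b : ℝ, (jsupp (a • u + b • v)).card ≤ s := fun a b =>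
    (card_le_card (jsupp_smul_add_smul_subset a b u v)).trans hcard
  have hscaled := hRIP.abs_dotProduct_mulVec_le_of_orthogonal (u := l2 v • u) (v := l2 u • v)
    (hsupp _ _) (by simpa only [sub_eq_add_neg, ← neg_smul] using hsupp (l2 v) (-l2 u))
    (by simp [dotProduct_eq_zero_of_disjoint_jsupp hd])
  simp only [l2_sq, Matrix.mulVec_smul, smul_dotProduct, dotProduct_smul, smul_eq_mul, abs_mul,
    abs_of_nonneg (l2_nonneg _)] at hscaled
  rcases (mul_nonneg (l2_nonneg u) (l2_nonneg v)).eq_or_lt with h0 | hpos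
  · rcases mul_eq_zero.mp h0.symm with hu | hv
    · rw [hu, eq_zero_of_l2_eq_zero hu]; simp
    · rw [hv, eq_zero_of_l2_eq_zero hv]; simp
  · refine le_of_mul_le_mul_left ?_ hpos
    rw [← l2_sq, ← l2_sq] at hscaled
    nlinarith [hscaled]

lemma abs_dotProduct_mulVec_rT_le (hRIP : JRIP Φ s σ) {A B : Finset (Fin N)}
    (hd : Disjoint A B) (hcard : A.card + B.card ≤ s) (u v : Fin N ⊕ Fin N → ℝ) :
    |Φ *ᵥ rT A u ⬝ᵥ Φ *ᵥ rT B v| ≤ σ * l2 (rT A u) * l2 (rT B v) :=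
  hRIP.abs_dotProduct_mulVec_le_of_disjoint
    (hd.mono (jsupp_rT_subset A u) (jsupp_rT_subset B v))
    ((card_le_card (union_subset_union (jsupp_rT_subset A u) (jsupp_rT_subset B v))).trans
      ((card_union_le A B).trans hcard))

variable {T T1 : Finset (Fin N)} {h : Fin N ⊕ Fin N → ℝ}

lemma abs_dotProduct_mulVec_rT_union_le (hRIP : JRIP Φ (2 * K) σ) (hσ : 0 ≤ σ)
    (hT : T.card ≤ K) (hT1 : T1.card ≤ K) (hTT1 : Disjoint T T1) {B : Finset (Fin N)}
    (hB : B.card ≤ K) (hBT : Disjoint B (T ∪ T1)) :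
    |Φ *ᵥ rT B h ⬝ᵥ Φ *ᵥ rT (T ∪ T1) h| ≤ σ * √2 * l2 (rT (T ∪ T1) h) * l2 (rT B h) := by
  have hBT' := disjoint_union_right.mp hBT
  have h1 := hRIP.abs_dotProduct_mulVec_rT_le hBT'.1 (by omega) h h
  have h2 := hRIP.abs_dotProduct_mulVec_rT_le hBT'.2 (by omega) h h
  calc |Φ *ᵥ rT B h ⬝ᵥ Φ *ᵥ rT (T ∪ T1) h|
        = |Φ *ᵥ rT B h ⬝ᵥ Φ *ᵥ rT T h + Φ *ᵥ rT B h ⬝ᵥ Φ *ᵥ rT T1 h| := by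
        rw [rT_union hTT1, Matrix.mulVec_add, dotProduct_add]
    _ ≤ |Φ *ᵥ rT B h ⬝ᵥ Φ *ᵥ rT T h| + |Φ *ᵥ rT B h ⬝ᵥ Φ *ᵥ rT T1 h| := abs_add_le _ _
    _ ≤ σ * l2 (rT B h) * (l2 (rT T h) + l2 (rT T1 h)) := by linarith
    _ ≤ σ * l2 (rT B h) * (√2 * l2 (rT (T ∪ T1) h)) := by
        gcongr
        · exact mul_nonneg hσ (l2_nonneg _)
        · exact l2_rT_add_l2_rT_le hTT1 h
    _ = σ * √2 * l2 (rT (T ∪ T1) h) * l2 (rT B h) := by ring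

lemma abs_dotProduct_mulVec_rT_sdiff_le (hRIP : JRIP Φ (2 * K) σ) (hσ : 0 ≤ σ) (hK : 0 < K)
    (hT : T.card ≤ K) (hT1sub : T1 ⊆ Tᶜ) (hT1card : T1.card = K)
    (hT1big : ∀ i ∈ T1, ∀ j ∈ Tᶜ \ T1, jmag h j ≤ jmag h i) :
    |Φ *ᵥ rT (Tᶜ \ T1) h ⬝ᵥ Φ *ᵥ rT (T ∪ T1) h| ≤
      σ * √2 * l2 (rT (T ∪ T1) h) * n21 (rT Tᶜ h) / √K := by
  have hTT1 : Disjoint T T1 := disjoint_left.mpr fun i hi hi1 => mem_compl.mp (hT1sub hi1) hi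
  rw [n21_rT]
  refine le_of_shelling_of_top (fun B => |Φ *ᵥ rT B h ⬝ᵥ Φ *ᵥ rT (T ∪ T1) h|) hK
    (mul_nonneg (mul_nonneg hσ (Real.sqrt_nonneg 2)) (l2_nonneg _)) (jmag_nonneg h) ?_ ?_
    hT1sub hT1card hT1big
  · intro A B hAB
    simp only [rT_union hAB, Matrix.mulVec_add, add_dotProduct]
    exact abs_add_le _ _
  · intro B hB hBcard
    rw [← l2_rT]
    refine hRIP.abs_dotProduct_mulVec_rT_union_le hσ hT hT1card.le hTT1 hBcard ?_
    refine disjoint_left.mpr fun i hi hi' => ?_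
    have := mem_sdiff.mp (hB hi)
    rcases mem_union.mp hi' with hiT | hiT1
    · exact mem_compl.mp this.1 hiT
    · exact this.2 hiT1

lemma le_dotProduct_mulVec_rT_union (hRIP : JRIP Φ (2 * K) σ) (hσ : 0 ≤ σ) (hK : 0 < K)
    (hT : T.card ≤ K) (hT1sub : T1 ⊆ Tᶜ) (hT1card : T1.card = K)
    (hT1big : ∀ i ∈ T1, ∀ j ∈ Tᶜ \ T1, jmag h j ≤ jmag h i) :
    (1 - σ) * l2 (rT (T ∪ T1) h) ^ 2 -
        √2 * (1 / √K) * σ * n21 (rT Tᶜ h) * l2 (rT (T ∪ T1) h) ≤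
      Φ *ᵥ h ⬝ᵥ Φ *ᵥ rT (T ∪ T1) h := by
  have hsplit : Φ *ᵥ h ⬝ᵥ Φ *ᵥ rT (T ∪ T1) h =
      Φ *ᵥ rT (T ∪ T1) h ⬝ᵥ Φ *ᵥ rT (T ∪ T1) h + Φ *ᵥ rT (Tᶜ \ T1) h ⬝ᵥ Φ *ᵥ rT (T ∪ T1) h := by
    rw [← add_dotProduct, ← Matrix.mulVec_add, sdiff_eq_inter_compl, ← compl_union,
      rT_add_rT_compl]
  have hcard : (jsupp (rT (T ∪ T1) h)).card ≤ 2 * K :=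
    (card_le_card (jsupp_rT_subset _ _)).trans ((card_union_le T T1).trans (by omega))
  have hlow := (hRIP _ hcard).1
  have hcross := hRIP.abs_dotProduct_mulVec_rT_sdiff_le hσ hK hT hT1sub hT1card hT1big
  rw [l2_sq (Φ *ᵥ _)] at hlow
  rw [hsplit]
  have hreorder : σ * √2 * l2 (rT (T ∪ T1) h) * n21 (rT Tᶜ h) / √K =
      √2 * (1 / √K) * σ * n21 (rT Tᶜ h) * l2 (rT (T ∪ T1) h) := by ring
  linarith [(abs_le.mp hcross).1]

end JRIP

lemma le_div_of_mul_sq_le_mul {a x E : ℝ} (ha : 0 < a) (hx : 0 ≤ x) (hE : 0 ≤ E)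
    (h : a * x ^ 2 ≤ E * x) : x ≤ E / a := by
  rw [le_div_iff₀ ha]
  rcases hx.eq_or_lt with rfl | hpos
  · simpa using hE
  · exact le_of_mul_le_mul_right (by nlinarith) hpos

theorem stmt9_general {M N K : ℕ} (hK : 0 < K) (Φ : Matrix (Fin M) (Fin N ⊕ Fin N) ℝ)
    (σ lam : ℝ) (hσ0 : 0 ≤ σ) (hσ : σ < 0.1907) (hRIP : JRIP Φ (2 * K) σ)
    (x xh : Fin N ⊕ Fin N → ℝ) (w : Fin M → ℝ) (y : Fin M → ℝ)
    (hy : y = Φ.mulVec x + w)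
    (hw : ninf1 (Φ.transpose.mulVec w) ≤ lam / 2)
    (hmin : ∀ u : Fin N ⊕ Fin N → ℝ,
      1 / 2 * l2 (Φ.mulVec xh - y) ^ 2 + lam * n21 xh ≤
        1 / 2 * l2 (Φ.mulVec u - y) ^ 2 + lam * n21 u)
    (T : Finset (Fin N)) (hTcard : T.card = K)
    (T1 : Finset (Fin N)) (hT1sub : T1 ⊆ Tᶜ) (hT1card : T1.card = K)
    (hT1big : ∀ i ∈ T1, ∀ j ∈ Tᶜ \ T1, jmag (xh - x) j ≤ jmag (xh - x) i) :
    l2 (rT (T ∪ T1) (xh - x)) ≤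
      (Real.sqrt K * lam * (3 * Real.sqrt 2 / 2) +
        Real.sqrt 2 * (1 / Real.sqrt K) * σ * n21 (rT Tᶜ (xh - x))) / (1 - σ) := by
  have hlam : 0 ≤ lam := by linarith [ninf1_nonneg (Φᵀ *ᵥ w)]
  have hσ1 : 0 < 1 - σ := by norm_num at hσ; linarith
  have hcard : √((T ∪ T1).card : ℝ) ≤ √2 * √K := by
    rw [← Real.sqrt_mul zero_le_two]
    exact Real.sqrt_le_sqrt (by exact_mod_cast (card_union_le T T1).trans (by omega))
  have hupper := dotProduct_mulVec_rT_le Φ (by positivity) (jmag_gram_sub_le Φ hlam hmin hy hw)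
    (T ∪ T1)
  have hlower := hRIP.le_dotProduct_mulVec_rT_union hσ0 hK hTcard.le hT1sub hT1card hT1big
  have hn21 := n21_nonneg (rT Tᶜ (xh - x))
  refine le_div_of_mul_sq_le_mul hσ1 (l2_nonneg _) (by positivity) ?_
  have hconst : 3 / 2 * lam * √((T ∪ T1).card : ℝ) ≤ √K * lam * (3 * √2 / 2) := by
    nlinarith [mul_le_mul_of_nonneg_left hcard hlam]
  nlinarith [mul_le_mul_of_nonneg_right hconst (l2_nonneg (rT (T ∪ T1) (xh - x)))]

theorem stmt9 {M N K : ℕ} (hK : 0 < K) (Φ : Matrix (Fin M) (Fin N ⊕ Fin N) ℝ)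
    (σ lam : ℝ) (hσ0 : 0 ≤ σ) (hσ : σ < 0.1907) (hRIP : JRIP Φ (2 * K) σ)
    (x xh : Fin N ⊕ Fin N → ℝ) (w : Fin M → ℝ) (y : Fin M → ℝ)
    (hy : y = Φ.mulVec x + w)
    (hw : ninf1 (Φ.transpose.mulVec w) ≤ lam / 2)
    (hmin : ∀ u : Fin N ⊕ Fin N → ℝ,
      1 / 2 * l2 (Φ.mulVec xh - y) ^ 2 + lam * n21 xh ≤
        1 / 2 * l2 (Φ.mulVec u - y) ^ 2 + lam * n21 u)
    (T : Finset (Fin N)) (hTcard : T.card = K)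
    (hTbig : ∀ i ∈ T, ∀ j ∉ T, jmag x j ≤ jmag x i)
    (T1 : Finset (Fin N)) (hT1sub : T1 ⊆ Tᶜ) (hT1card : T1.card = K)
    (hT1big : ∀ i ∈ T1, ∀ j ∈ Tᶜ \ T1, jmag (xh - x) j ≤ jmag (xh - x) i) :
    l2 (rT (T ∪ T1) (xh - x)) ≤
      (Real.sqrt K * lam * (3 * Real.sqrt 2 / 2) +
        Real.sqrt 2 * (1 / Real.sqrt K) * σ * n21 (rT Tᶜ (xh - x))) / (1 - σ) :=
  stmt9_general hK Φ σ lam hσ0 hσ hRIP x xh w y hy hw hmin T hTcard T1 hT1sub hT1card hT1big
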